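/- Let S₁ be an r₁×r₁ matrix and S₂ an r₂×r₂ matrix, both with entries in K[t], such that det S₁ = u₁·(t−θ)^{d₁} and det S₂ = u₂·(t−θ)^{d₂} for units u₁,u₂ ∈ K^× and integers d₁,d₂ ≥ 0. Suppose F is an r₂×r₁ matrix with entries in the rational function field K(t) satisfying F·S₁ = S₂·τ(F), where τ also denotes the extension of τ to K(t) and τ(F) is applied entrywise. Then there exists a nonzero polynomial h ∈ K[t] all of whose coefficients c satisfy c^q = c (equivalently τ(h) = h, i.e. h has coefficients in k) such that h·F has all entries in K[t]. -/

import Mathlib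

/-!
Let `I ⊆ K[t]` be the ideal of common denominators of the entries of `F`, with monic generator
`f`. Writing `σ` for `τ` on `K[t]`, the relation `F S₁ = S₂ τ(F)` gives
`det S₁ · F = S₂ τ(F) adj S₁` and `det S₂ · τ(F) = adj S₂ F S₁`. The first shows that
`det S₁ · σ(h) ∈ I` for every `h ∈ I`, so `f ∣ (t - θ)^{d₁} σ(f)`. The second shows that
`f det S₂` clears the denominators of `τ(F)`; since `f` and the numerators `fF` generate the unit
ideal, so do `σ(f)` and `σ(fF)`, whence `σ(f) ∣ (t - θ)^{d₂} f`. Two monic polynomials of the same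
degree dividing each other up to powers of the prime `t - θ` are equal, so `σ(f) = f`.
-/

open Polynomial

/-- The extension of the coefficientwise `q`-th power map `τ` to `K(t)`. -/
noncomputable def tauRatFunc (p n : ℕ) [Fact p.Prime] (K : Type) [Field K] [CharP K p] :
    RatFunc K →+* RatFunc K :=
  RatFunc.mapRingHom (Polynomial.mapRingHom (iterateFrobenius K p n))
    (by
      intro f hf
      rw [Submonoid.mem_comap]
      rw [mem_nonZeroDivisors_iff_ne_zero] at hf ⊢
      simpa using fun h =>
        hf (Polynomial.map_injective _ (iterateFrobenius K p n).injective (by simpa using h)))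

theorem dvd_of_forall_dvd_mul_of_span_eq_top {R : Type*} [CommRing R] {S : Set R}
    (hS : Ideal.span S = ⊤) {a b : R} (h : ∀ s ∈ S, a ∣ b * s) : a ∣ b := by
  have hle : Ideal.span S ≤ (Ideal.span {a}).colon {b} := Ideal.span_le.mpr fun s hs =>
    Submodule.mem_colon_singleton.mpr <| Ideal.mem_span_singleton.mpr <| by
      rw [smul_eq_mul, mul_comm]; exact h s hs
  rw [hS, top_le_iff] at hle
  have hb := Submodule.mem_colon_singleton.mp (hle ▸ Submodule.mem_top : (1 : R) ∈ _)
  rwa [one_smul, Ideal.mem_span_singleton] at hb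

theorem Polynomial.Monic.eq_of_natDegree_eq_of_dvd_pow_mul {K : Type*} [Field K] {P f g : K[X]}
    (hP : Prime P) (hf : f.Monic) (hg : g.Monic) (hdeg : f.natDegree = g.natDegree) {a b : ℕ}
    (hfg : f ∣ P ^ a * g) (hgf : g ∣ P ^ b * f) : f = g := by
  obtain ⟨s, hs⟩ := hfg
  obtain ⟨r, hr⟩ := hgf
  have hsr : s * r = P ^ (a + b) := by
    refine mul_left_cancel₀ (mul_ne_zero hf.ne_zero hg.ne_zero) ?_
    rw [pow_add]
    linear_combination (-(g * r)) * hs - P ^ a * g * hr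
  obtain ⟨e, -, hse⟩ := (dvd_prime_pow hP _).mp (Dvd.intro r hsr)
  have hs0 : s ≠ 0 := left_ne_zero_of_mul (hsr ▸ pow_ne_zero _ hP.ne_zero)
  have hdeg_s : s.natDegree = a * P.natDegree := by
    have := congrArg natDegree hs
    rw [Polynomial.natDegree_mul (pow_ne_zero _ hP.ne_zero) hg.ne_zero,
      Polynomial.natDegree_mul hf.ne_zero hs0, Polynomial.natDegree_pow, hdeg] at this
    omega
  have hea : e = a := by
    have := natDegree_eq_of_degree_eq (degree_eq_degree_of_associated hse)
    rw [Polynomial.natDegree_pow, hdeg_s] at this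
    exact (Nat.eq_of_mul_eq_mul_right (Irreducible.natDegree_pos hP.irreducible) this).symm
  subst hea
  have hassoc : Associated (P ^ e * g) (P ^ e * f) := by
    rw [hs, mul_comm (P ^ e)]
    exact hse.mul_left f
  exact eq_of_monic_of_associated hf hg
    (hassoc.of_mul_left (Associated.refl _) (pow_ne_zero _ hP.ne_zero)).symm

section

variable {R L : Type*} [CommRing R] [CommRing L] [Algebra R L] {m n : Type*}
  [Fintype m] [Fintype n] {A : Matrix n n R} {B : Matrix m m R} {X Y : Matrix m n L}

theorem Matrix.det_smul_eq_mul_mul_adjugate_map [DecidableEq n]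
    (h : X * A.map (algebraMap R L) = B.map (algebraMap R L) * Y) :
    A.det • X = B.map (algebraMap R L) * Y * A.adjugate.map (algebraMap R L) := by
  have hadj : A.adjugate.map (algebraMap R L) = (A.map (algebraMap R L)).adjugate :=
    (algebraMap R L).map_adjugate A
  have hdet : (A.map (algebraMap R L)).det = algebraMap R L A.det :=
    ((algebraMap R L).map_det A).symm
  rw [← h, hadj, Matrix.mul_assoc, Matrix.mul_adjugate, Matrix.mul_smul, Matrix.mul_one, hdet,
    algebraMap_smul]

theorem Matrix.det_smul_eq_adjugate_map_mul_mul [DecidableEq m]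
    (h : X * A.map (algebraMap R L) = B.map (algebraMap R L) * Y) :
    B.det • Y = B.adjugate.map (algebraMap R L) * X * A.map (algebraMap R L) := by
  have hadj : B.adjugate.map (algebraMap R L) = (B.map (algebraMap R L)).adjugate :=
    (algebraMap R L).map_adjugate B
  have hdet : (B.map (algebraMap R L)).det = algebraMap R L B.det :=
    ((algebraMap R L).map_det B).symm
  rw [Matrix.mul_assoc, h, hadj, ← Matrix.mul_assoc, Matrix.adjugate_mul, Matrix.smul_mul,
    Matrix.one_mul, hdet, algebraMap_smul]

end

section DenomIdeal

variable {R L : Type*} [CommRing R] [CommRing L] [Algebra R L] {m n : Type*}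

def denomIdeal (R : Type*) [CommRing R] [Algebra R L] (F : Matrix m n L) : Ideal R where
  carrier := {r | ∀ i j, IsLocalization.IsInteger R (r • F i j)}
  add_mem' ha hb i j := by
    simpa only [add_smul] using IsLocalization.isInteger_add (ha i j) (hb i j)
  zero_mem' i j := by simpa only [zero_smul] using IsLocalization.isInteger_zero
  smul_mem' c r hr i j := by
    simpa only [smul_eq_mul, mul_smul] using IsLocalization.isInteger_smul (hr i j)

theorem mem_denomIdeal_iff {F : Matrix m n L} {r : R} :
    r ∈ denomIdeal R F ↔ ∃ G : Matrix m n R, r • F = G.map (algebraMap R L) := by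
  refine ⟨fun h => ?_, fun ⟨G, hG⟩ i j =>
    RingHom.mem_rangeS.mpr ⟨G i j, (congrFun (congrFun hG i) j).symm⟩⟩
  choose G hG using fun i j => RingHom.mem_rangeS.mp (h i j)
  exact ⟨Matrix.of G, by ext i j; exact (hG i j).symm⟩

theorem denomIdeal_ne_bot [IsDomain R] [IsFractionRing R L] [Finite m] [Finite n]
    (F : Matrix m n L) : denomIdeal R F ≠ ⊥ := by
  obtain ⟨b, hb⟩ := IsLocalization.exist_integer_multiples_of_finite (nonZeroDivisors R)
    (fun ij : m × n => F ij.1 ij.2)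
  have hb' : (b : R) ∈ denomIdeal R F := fun i j => hb (i, j)
  intro h
  rw [h, Ideal.mem_bot] at hb'
  exact nonZeroDivisors.coe_ne_zero b hb'

theorem mul_mem_denomIdeal_of_smul_eq {F M : Matrix m n L} {c g : R} (hcF : c • F = M)
    (hg : g ∈ denomIdeal R M) : c * g ∈ denomIdeal R F := by
  subst hcF
  intro i j
  rw [mul_comm, mul_smul]
  exact hg i j

theorem smul_map_eq_map_map {σ : R →+* R} {τ : L →+* L}
    (hστ : ∀ r, τ (algebraMap R L r) = algebraMap R L (σ r)) {F : Matrix m n L} {r : R}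
    {G : Matrix m n R} (hG : r • F = G.map (algebraMap R L)) :
    σ r • F.map τ = (G.map σ).map (algebraMap R L) := by
  ext i j
  simpa [Algebra.smul_def, hστ] using congrArg τ (congrFun (congrFun hG i) j)

theorem map_mem_denomIdeal_map {σ : R →+* R} {τ : L →+* L}
    (hστ : ∀ r, τ (algebraMap R L r) = algebraMap R L (σ r)) {F : Matrix m n L} {r : R}
    (hr : r ∈ denomIdeal R F) : σ r ∈ denomIdeal R (F.map τ) :=
  let ⟨G, hG⟩ := mem_denomIdeal_iff.mp hr
  mem_denomIdeal_iff.mpr ⟨G.map σ, smul_map_eq_map_map hστ hG⟩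

variable [Fintype m] [Fintype n]

theorem mem_denomIdeal_mul_mul {l o : Type*} [Fintype o] {F : Matrix m n L} {g : R}
    (hg : g ∈ denomIdeal R F) (A : Matrix l m R) (B : Matrix n o R) :
    g ∈ denomIdeal R (A.map (algebraMap R L) * F * B.map (algebraMap R L)) := by
  obtain ⟨G, hG⟩ := mem_denomIdeal_iff.mp hg
  refine mem_denomIdeal_iff.mpr ⟨A * G * B, ?_⟩
  rw [← Matrix.smul_mul, ← Matrix.mul_smul, hG, Matrix.map_mul, Matrix.map_mul]

end DenomIdeal

section FractionField

variable {R L : Type*} [CommRing R] [IsDomain R] [IsPrincipalIdealRing R] [Field L] [Algebra R L]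
  [IsFractionRing R L] {m n : Type*} [Fintype m] [Fintype n]

theorem span_insert_range_eq_top_of_denomIdeal_eq {F : Matrix m n L} {f : R}
    (hf : denomIdeal R F = Ideal.span {f}) {G : Matrix m n R}
    (hG : f • F = G.map (algebraMap R L)) :
    Ideal.span (insert f (Set.range fun ij : m × n => G ij.1 ij.2)) = ⊤ := by
  set S := insert f (Set.range fun ij : m × n => G ij.1 ij.2)
  -- A generator `e` of the span divides `f` and `G`, so `(f / e) • F = (G / e).map _` and
  -- `f ∣ f / e`: hence `e` is a unit.
  obtain ⟨e, he⟩ := (IsPrincipalIdealRing.principal (Ideal.span S)).principal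
  rw [Ideal.submodule_span_eq] at he
  have hdvd : ∀ s ∈ S, e ∣ s :=
    fun s hs => Ideal.mem_span_singleton.mp (he ▸ Ideal.subset_span hs)
  obtain ⟨f₁, rfl⟩ := hdvd f (Set.mem_insert _ _)
  have hf0 : e * f₁ ≠ 0 := by
    intro h0
    exact denomIdeal_ne_bot F (by rw [hf, h0, Ideal.span_singleton_eq_bot])
  have hf₁ : f₁ ∈ denomIdeal R F := by
    intro i j
    obtain ⟨w, hw⟩ := hdvd (G i j) (Set.mem_insert_of_mem _ ⟨(i, j), rfl⟩)
    refine RingHom.mem_rangeS.mpr ⟨w, mul_left_cancel₀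
      ((map_ne_zero_iff _ (IsFractionRing.injective R L)).mpr (left_ne_zero_of_mul hf0)) ?_⟩
    have := congrFun (congrFun hG i) j
    simp only [Matrix.smul_apply, Matrix.map_apply, hw, Algebra.smul_def, map_mul] at this
    rw [← this, Algebra.smul_def, mul_assoc]
  rw [hf, Ideal.mem_span_singleton] at hf₁
  have he_dvd_one : e ∣ 1 :=
    (mul_dvd_mul_iff_right (right_ne_zero_of_mul hf0)).mp (by rwa [one_mul])
  rw [he, Ideal.span_singleton_eq_top]
  exact isUnit_of_dvd_one he_dvd_one

theorem dvd_of_mem_denomIdeal_map {σ : R →+* R} {τ : L →+* L}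
    (hστ : ∀ r, τ (algebraMap R L r) = algebraMap R L (σ r)) {F : Matrix m n L} {f g : R}
    (hf : denomIdeal R F = Ideal.span {f}) (hg : g ∈ denomIdeal R (F.map τ)) : σ f ∣ g := by
  obtain ⟨G, hG⟩ := mem_denomIdeal_iff.mp (hf ▸ Ideal.mem_span_singleton_self f)
  obtain ⟨H, hH⟩ := mem_denomIdeal_iff.mp hg
  have hGH : ∀ i j, g * σ (G i j) = σ f * H i j := by
    intro i j
    apply IsFractionRing.injective R L
    have hσG := congrFun (congrFun (smul_map_eq_map_map hστ hG) i) j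
    have hHij := congrFun (congrFun hH i) j
    simp only [Matrix.smul_apply, Matrix.map_apply, Algebra.smul_def] at hσG hHij
    rw [map_mul, map_mul, ← hσG, ← hHij]
    ring
  set S := insert f (Set.range fun ij : m × n => G ij.1 ij.2)
  refine dvd_of_forall_dvd_mul_of_span_eq_top (S := σ '' S) ?_ ?_
  · rw [← Ideal.map_span, span_insert_range_eq_top_of_denomIdeal_eq hf hG, Ideal.map_top]
  · rintro _ ⟨s, rfl | ⟨⟨i, j⟩, rfl⟩, rfl⟩
    · exact dvd_mul_left _ _
    · exact Dvd.intro _ (hGH i j).symm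

end FractionField

theorem tauRatFunc_algebraMap (p n : ℕ) [Fact p.Prime] (K : Type) [Field K] [CharP K p]
    (g : K[X]) :
    tauRatFunc p n K (algebraMap K[X] (RatFunc K) g) =
      algebraMap K[X] (RatFunc K) (mapRingHom (iterateFrobenius K p n) g) := by
  rw [tauRatFunc, RatFunc.coe_mapRingHom_eq_coe_map, ← div_one (algebraMap _ _ g),
    ← map_one (algebraMap K[X] (RatFunc K)), RatFunc.map_apply_div]
  simp

theorem stmt_1
    (p n : ℕ) [Fact p.Prime]
    (K : Type) [Field K] [CharP K p] (θ : K)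
    (r₁ r₂ : ℕ)
    (S₁ : Matrix (Fin r₁) (Fin r₁) (Polynomial K))
    (S₂ : Matrix (Fin r₂) (Fin r₂) (Polynomial K))
    (u₁ u₂ : Kˣ) (d₁ d₂ : ℕ)
    (h₁ : S₁.det = C (u₁ : K) * (X - C θ) ^ d₁)
    (h₂ : S₂.det = C (u₂ : K) * (X - C θ) ^ d₂)
    (F : Matrix (Fin r₂) (Fin r₁) (RatFunc K))
    (hF : F * S₁.map (algebraMap (Polynomial K) (RatFunc K)) =
          S₂.map (algebraMap (Polynomial K) (RatFunc K)) * F.map (tauRatFunc p n K)) :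
    ∃ h : Polynomial K, h ≠ 0 ∧ (∀ i, (h.coeff i) ^ p ^ n = h.coeff i) ∧
      ∀ i j, ∃ g : Polynomial K,
        algebraMap (Polynomial K) (RatFunc K) h * F i j =
          algebraMap (Polynomial K) (RatFunc K) g := by
  set σ : K[X] →+* K[X] := mapRingHom (iterateFrobenius K p n)
  have hστ := tauRatFunc_algebraMap p n K
  obtain ⟨f, hf_monic, hf⟩ := exists_monic_span _ (denomIdeal_ne_bot (R := K[X]) F)
  have hfF : f ∈ denomIdeal K[X] F := hf ▸ Ideal.mem_span_singleton_self f
  have hf_dvd : f ∣ (X - C θ) ^ d₁ * σ f := by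
    have := mul_mem_denomIdeal_of_smul_eq (Matrix.det_smul_eq_mul_mul_adjugate_map hF)
      (mem_denomIdeal_mul_mul (map_mem_denomIdeal_map hστ hfF) _ _)
    rwa [hf, Ideal.mem_span_singleton, h₁, mul_assoc,
      (isUnit_C.mpr u₁.isUnit).dvd_mul_left] at this
  have hσf_dvd : σ f ∣ (X - C θ) ^ d₂ * f := by
    have := dvd_of_mem_denomIdeal_map hστ hf (mul_mem_denomIdeal_of_smul_eq
      (Matrix.det_smul_eq_adjugate_map_mul_mul hF) (mem_denomIdeal_mul_mul hfF _ _))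
    rwa [h₂, mul_assoc, (isUnit_C.mpr u₂.isUnit).dvd_mul_left] at this
  have hσf : σ f = f :=
    (hf_monic.eq_of_natDegree_eq_of_dvd_pow_mul (prime_X_sub_C θ) (hf_monic.map _)
      (natDegree_map_eq_of_injective (iterateFrobenius K p n).injective f).symm
      hf_dvd hσf_dvd).symm
  obtain ⟨G, hG⟩ := mem_denomIdeal_iff.mp hfF
  refine ⟨f, hf_monic.ne_zero, fun i => ?_, fun i j => ⟨G i j, ?_⟩⟩
  · simpa [σ, coeff_map, iterateFrobenius_def] using congrArg (coeff · i) hσf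
  · rw [← Algebra.smul_def]
    exact congrFun (congrFun hG i) j
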